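/- arXiv:2502.10122 — 3 statements merged into one kernel-verified Lean document; each statement's English description precedes it below -/
import Mathlib

section
/- Let D be a positive natural number, let x̄ : [0,1] → ℝ^D be a continuous function, and let β > 0. Define E_concave(q) = -(1/β) · log(∫₀¹ exp(β · ⟪x̄(t), q⟫) dt) and E_convex(q) = (1/2)·‖q‖², and for q ∈ ℝ^D define the Gibbs density p_q(t) = exp(β · ⟪x̄(t), q⟫) / ∫₀¹ exp(β · ⟪x̄(s), q⟫) ds for t ∈ [0,1]. Then for every q ∈ ℝ^D, the function q' ↦ E_convex(q') + E_concave(q) + ⟪∇E_concave(q), q' - q⟫ (the convex part plus the first-order Taylor linearization of the concave part around q, as used in one step of the concave–convex procedure) has a unique global minimizer over ℝ^D, and this minimizer equals the Gibbs expectation ∫₀¹ p_q(t) · x̄(t) dt. -/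
/-!
The gradient of the log-partition function `q ↦ log ∫ exp ⟪x t, q⟫` is the Gibbs expectation
(differentiate under the integral sign, with `x` bounded). Hence the gradient of the concave
part is `-m`, `m` the Gibbs expectation, and completing the square writes the linearized objective
as a constant plus `‖q' - m‖² / 2`, whose unique minimizer is `m`.
-/

open MeasureTheory RealInnerProductSpace Real

section LogPartition

lemma exp_inner_le_exp_mul_norm {E : Type*} [NormedAddCommGroup E] [InnerProductSpace ℝ E]
    {C : ℝ} {v : E} (hv : ‖v‖ ≤ C) (q : E) : exp ⟪v, q⟫ ≤ exp (C * ‖q‖) :=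
  exp_le_exp.2 <| (real_inner_le_norm v q).trans <| by gcongr

variable {α E : Type*} [MeasurableSpace α] {μ : Measure α} [IsFiniteMeasure μ]
  [NormedAddCommGroup E] [InnerProductSpace ℝ E] {x : α → E} {C : ℝ}

lemma integrable_exp_inner (hxm : AEStronglyMeasurable x μ) (hC : ∀ᵐ t ∂μ, ‖x t‖ ≤ C) (q : E) :
    Integrable (fun t => exp ⟪x t, q⟫) μ := by
  refine .of_bound (continuous_exp.comp_aestronglyMeasurable (hxm.inner aestronglyMeasurable_const))
    (exp (C * ‖q‖)) ?_
  filter_upwards [hC] with t ht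
  rw [norm_of_nonneg (exp_pos _).le]
  exact exp_inner_le_exp_mul_norm ht q

variable [CompleteSpace E]

lemma hasFDerivAt_integral_exp_inner (hxm : AEStronglyMeasurable x μ)
    (hC : ∀ᵐ t ∂μ, ‖x t‖ ≤ C) (q : E) :
    HasFDerivAt (fun q => ∫ t, exp ⟪x t, q⟫ ∂μ)
      (innerSL ℝ (∫ t, exp ⟪x t, q⟫ • x t ∂μ)) q := by
  have hderiv : ∀ t r, HasFDerivAt (fun q => exp ⟪x t, q⟫) (innerSL ℝ (exp ⟪x t, r⟫ • x t)) r := by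
    intro t r
    simpa only [map_smul, innerSL_apply_apply] using ((innerSL ℝ (x t)).hasFDerivAt (x := r)).exp
  have hxq : Integrable (fun t => exp ⟪x t, q⟫ • x t) μ :=
    (integrable_exp_inner hxm hC q).smul_bdd C hxm hC
  rw [← ContinuousLinearMap.integral_comp_comm _ hxq]
  refine hasFDerivAt_integral_of_dominated_of_fderiv_le (Metric.ball_mem_nhds q one_pos)
    (.of_forall fun r => (integrable_exp_inner hxm hC r).aestronglyMeasurable)
    (integrable_exp_inner hxm hC q) ((innerSL ℝ).continuous.comp_aestronglyMeasurable
      hxq.aestronglyMeasurable) (bound := fun _ => exp (C * (‖q‖ + 1)) * C) ?_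
    (integrable_const _) (.of_forall fun t r _ => hderiv t r)
  filter_upwards [hC] with t ht r hr
  have hr' : ‖r‖ ≤ ‖q‖ + 1 := (norm_lt_of_mem_ball hr).le
  have hC0 : 0 ≤ C := (norm_nonneg _).trans ht
  rw [innerSL_apply_norm, norm_smul, norm_of_nonneg (exp_pos _).le]
  gcongr
  exact (real_inner_le_norm _ _).trans (by gcongr)

lemma hasGradientAt_log_integral_exp_inner [NeZero μ] (hxm : AEStronglyMeasurable x μ)
    (hC : ∀ᵐ t ∂μ, ‖x t‖ ≤ C) (q : E) :
    HasGradientAt (fun q => log (∫ t, exp ⟪x t, q⟫ ∂μ))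
      (∫ t, (exp ⟪x t, q⟫ / ∫ s, exp ⟪x s, q⟫ ∂μ) • x t ∂μ) q := by
  set Z := ∫ s, exp ⟪x s, q⟫ ∂μ
  have hZ : 0 < Z := integral_exp_pos (integrable_exp_inner hxm hC q)
  have hmean : ∫ t, (exp ⟪x t, q⟫ / Z) • x t ∂μ = Z⁻¹ • ∫ t, exp ⟪x t, q⟫ • x t ∂μ := by
    simp_rw [div_eq_inv_mul, ← smul_smul]
    exact integral_smul _ _
  rw [hasGradientAt_iff_hasFDerivAt, hmean]
  refine ((hasFDerivAt_integral_exp_inner hxm hC q).log hZ.ne').congr_fderiv ?_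
  ext v
  simp [Z]

lemma hasGradientAt_neg_inv_mul_log_integral_exp_mul_inner [NeZero μ]
    (hxm : AEStronglyMeasurable x μ) (hC : ∀ᵐ t ∂μ, ‖x t‖ ≤ C) {β : ℝ} (hβ : β ≠ 0) (q : E) :
    HasGradientAt (fun q => -(1 / β) * log (∫ t, exp (β * ⟪x t, q⟫) ∂μ))
      (-∫ t, (exp (β * ⟪x t, q⟫) / ∫ s, exp (β * ⟪x s, q⟫) ∂μ) • x t ∂μ) q := by
  have hβx : ∀ᵐ t ∂μ, ‖β • x t‖ ≤ |β| * C := by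
    filter_upwards [hC] with t ht
    rw [norm_smul, norm_eq_abs]
    gcongr
  have h : HasGradientAt (fun q => log (∫ t, exp (β * ⟪x t, q⟫) ∂μ))
      (∫ t, (exp (β * ⟪x t, q⟫) / ∫ s, exp (β * ⟪x s, q⟫) ∂μ) • β • x t ∂μ) q := by
    simpa only [Pi.smul_apply, real_inner_smul_left] using
      hasGradientAt_log_integral_exp_inner (hxm.const_smul β) hβx q
  rw [hasGradientAt_iff_hasFDerivAt] at h ⊢
  refine (h.const_mul (-(1 / β))).congr_fderiv ?_
  simp_rw [smul_comm _ β, integral_smul, map_smul, map_neg, smul_smul, one_div, neg_mul,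
    inv_mul_cancel₀ hβ, neg_smul, one_smul]

end LogPartition

lemma half_norm_sq_add_inner_neg_sub_eq {E : Type*} [NormedAddCommGroup E] [InnerProductSpace ℝ E]
    (m q y : E) (c : ℝ) :
    1 / 2 * ‖y‖ ^ 2 + c + ⟪-m, y - q⟫ =
      1 / 2 * ‖m‖ ^ 2 + c + ⟪-m, m - q⟫ + 1 / 2 * ‖y - m‖ ^ 2 := by
  rw [norm_sub_sq_real, inner_neg_left, inner_neg_left, inner_sub_right, inner_sub_right,
    real_inner_self_eq_norm_sq, real_inner_comm m y]
  ring

lemma forall_le_iff_eq_of_eq_add_half_norm_sq {E : Type*} [NormedAddCommGroup E] {f : E → ℝ}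
    {m : E} (hf : ∀ y, f y = f m + 1 / 2 * ‖y - m‖ ^ 2) (m' : E) :
    (∀ y, f m' ≤ f y) ↔ m' = m := by
  constructor
  · intro h
    have hle : ‖m' - m‖ ^ 2 ≤ 0 := by linarith [h m, hf m']
    simpa [sub_eq_zero] using le_antisymm hle (sq_nonneg _)
  · rintro rfl y
    rw [hf y]
    exact le_add_of_nonneg_right (by positivity)

theorem cccp_update_is_gibbs_expectation_general
    (D : ℕ)
    (x : ℝ → EuclideanSpace ℝ (Fin D)) (hx : ContinuousOn x (Set.Icc 0 1))
    (β : ℝ) (hβ : 0 < β)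
    (Econcave : EuclideanSpace ℝ (Fin D) → ℝ)
    (hEconcave : Econcave = fun q =>
      -(1 / β) * Real.log (∫ t in Set.Icc (0 : ℝ) 1, Real.exp (β * ⟪x t, q⟫)))
    (Econvex : EuclideanSpace ℝ (Fin D) → ℝ)
    (hEconvex : Econvex = fun q => (1 / 2) * ‖q‖ ^ 2)
    (p : EuclideanSpace ℝ (Fin D) → ℝ → ℝ)
    (hp : p = fun q t =>
      Real.exp (β * ⟪x t, q⟫) / ∫ s in Set.Icc (0 : ℝ) 1, Real.exp (β * ⟪x s, q⟫))
    (q : EuclideanSpace ℝ (Fin D))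
    (lin : EuclideanSpace ℝ (Fin D) → ℝ)
    (hlin : lin = fun q' => Econvex q' + Econcave q + ⟪gradient Econcave q, q' - q⟫) :
    (∀ q', lin (∫ t in Set.Icc (0 : ℝ) 1, p q t • x t) ≤ lin q') ∧
    (∀ m, (∀ q', lin m ≤ lin q') → m = ∫ t in Set.Icc (0 : ℝ) 1, p q t • x t) := by
  set m := ∫ t in Set.Icc (0 : ℝ) 1, p q t • x t
  obtain ⟨C, hC⟩ := isCompact_Icc.exists_bound_of_continuousOn hx
  have : NeZero (volume.restrict (Set.Icc (0 : ℝ) 1)) := ⟨by simp⟩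
  have hgrad : gradient Econcave q = -m := by
    subst hEconcave hp
    exact (hasGradientAt_neg_inv_mul_log_integral_exp_mul_inner
      (hx.aestronglyMeasurable measurableSet_Icc) (ae_restrict_of_forall_mem measurableSet_Icc hC)
      hβ.ne' q).gradient
  have hlin_eq : ∀ y, lin y = lin m + 1 / 2 * ‖y - m‖ ^ 2 := by
    subst hlin hEconvex
    simpa only [hgrad] using fun y => half_norm_sq_add_inner_neg_sub_eq m q y (Econcave q)
  exact ⟨fun y => (forall_le_iff_eq_of_eq_add_half_norm_sq hlin_eq m).2 rfl y,
    fun m' hm' => (forall_le_iff_eq_of_eq_add_half_norm_sq hlin_eq m').1 hm'⟩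

/-- Proposition 1 of the paper (CCCP step): for the continuous Hopfield energy
`E = E_concave + E_convex`, the function obtained by adding the convex part to the
first-order Taylor linearization of the concave part around `q` has a unique global
minimizer, equal to the Gibbs expectation `∫₀¹ p_q(t) • x̄(t) dt`. -/
theorem cccp_update_is_gibbs_expectation
    (D : ℕ) (hD : 0 < D)
    (x : ℝ → EuclideanSpace ℝ (Fin D)) (hx : ContinuousOn x (Set.Icc 0 1))
    (β : ℝ) (hβ : 0 < β)
    (Econcave : EuclideanSpace ℝ (Fin D) → ℝ)
    (hEconcave : Econcave = fun q =>
      -(1 / β) * Real.log (∫ t in Set.Icc (0 : ℝ) 1, Real.exp (β * ⟪x t, q⟫)))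
    (Econvex : EuclideanSpace ℝ (Fin D) → ℝ)
    (hEconvex : Econvex = fun q => (1 / 2) * ‖q‖ ^ 2)
    (p : EuclideanSpace ℝ (Fin D) → ℝ → ℝ)
    (hp : p = fun q t =>
      Real.exp (β * ⟪x t, q⟫) / ∫ s in Set.Icc (0 : ℝ) 1, Real.exp (β * ⟪x s, q⟫))
    (q : EuclideanSpace ℝ (Fin D))
    (lin : EuclideanSpace ℝ (Fin D) → ℝ)
    (hlin : lin = fun q' => Econvex q' + Econcave q + ⟪gradient Econcave q, q' - q⟫) :
    (∀ q', lin (∫ t in Set.Icc (0 : ℝ) 1, p q t • x t) ≤ lin q') ∧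
    (∀ m, (∀ q', lin m ≤ lin q') → m = ∫ t in Set.Icc (0 : ℝ) 1, p q t • x t) :=
  cccp_update_is_gibbs_expectation_general D x hx β hβ Econcave hEconcave Econvex hEconvex p hp q
    lin hlin
end

section
/- Let D be a positive natural number, let x̄ : [0,1] → ℝ^D be a continuous function, and let β > 0. Define E_concave(q) = -(1/β) · log(∫₀¹ exp(β · ⟪x̄(t), q⟫) dt) and, for q ∈ ℝ^D, the Gibbs density p_q(t) = exp(β · ⟪x̄(t), q⟫) / ∫₀¹ exp(β · ⟪x̄(s), q⟫) ds. Then E_concave is differentiable on ℝ^D and its gradient is ∇E_concave(q) = -∫₀¹ p_q(t) · x̄(t) dt, the negative of the Gibbs expectation of x̄. -/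
/-! Differentiating under the integral sign is legitimate because `x̄` is bounded on `[0, 1]`:
on the unit ball around `q₀` the derivative `β e^{β⟪x̄ t, q⟫} ⟪x̄ t, ·⟫` of the integrand is
bounded by a constant. Hence the partition function `Z(q) = ∫₀¹ e^{β⟪x̄ t, q⟫} dt` has gradient
`β ∫₀¹ e^{β⟪x̄ t, q⟫} x̄ t dt`, so `log Z` has gradient `β` times the Gibbs expectation of `x̄`,
and the factor `-1/β` in `E_concave` cancels that `β`. -/

open MeasureTheory RealInnerProductSpace

section GibbsMeasure

variable {α E : Type*} [MeasurableSpace α] [NormedAddCommGroup E] [InnerProductSpace ℝ E]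

theorem HasDerivAt.comp_hasGradientAt [CompleteSpace E] {g : ℝ → ℝ} {g' : ℝ} {f : E → ℝ}
    {f' q : E} (hg : HasDerivAt g g' (f q)) (hf : HasGradientAt f f' q) :
    HasGradientAt (g ∘ f) (g' • f') q := by
  rw [hasGradientAt_iff_hasFDerivAt, map_smul] at *
  exact hg.comp_hasFDerivAt q hf

theorem exp_mul_inner_le {v q : E} {β M R : ℝ} (hv : ‖v‖ ≤ M) (hq : ‖q‖ ≤ R) :
    Real.exp (β * ⟪v, q⟫) ≤ Real.exp (|β| * (M * R)) := by
  refine Real.exp_le_exp.2 <| (le_abs_self _).trans ?_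
  rw [abs_mul]
  gcongr
  exact (abs_real_inner_le_norm v q).trans <|
    mul_le_mul hv hq (norm_nonneg q) ((norm_nonneg v).trans hv)

noncomputable def partitionFunction (μ : Measure α) (β : ℝ) (x : α → E) (q : E) : ℝ :=
  ∫ t, Real.exp (β * ⟪x t, q⟫) ∂μ

noncomputable def gibbsDensity (μ : Measure α) (β : ℝ) (x : α → E) (q : E) (t : α) : ℝ :=
  Real.exp (β * ⟪x t, q⟫) / partitionFunction μ β x q

variable {μ : Measure α} [IsFiniteMeasure μ] {β M : ℝ} {x : α → E}

theorem integrable_exp_mul_inner (hx : AEStronglyMeasurable x μ) (hM : ∀ᵐ t ∂μ, ‖x t‖ ≤ M)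
    (q : E) : Integrable (fun t => Real.exp (β * ⟪x t, q⟫)) μ :=
  .of_bound (by fun_prop) _ <| hM.mono fun t ht => by
    rw [Real.norm_of_nonneg (Real.exp_pos _).le]
    exact exp_mul_inner_le ht le_rfl

theorem partitionFunction_pos [NeZero μ] (hx : AEStronglyMeasurable x μ)
    (hM : ∀ᵐ t ∂μ, ‖x t‖ ≤ M) (q : E) : 0 < partitionFunction μ β x q :=
  integral_exp_pos (integrable_exp_mul_inner hx hM q)

theorem hasFDerivAt_partitionFunction (hx : AEStronglyMeasurable x μ)
    (hM : ∀ᵐ t ∂μ, ‖x t‖ ≤ M) (q₀ : E) :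
    HasFDerivAt (partitionFunction μ β x)
      (∫ t, innerSL ℝ ((β * Real.exp (β * ⟪x t, q₀⟫)) • x t) ∂μ) q₀ := by
  have hderiv (t : α) (q : E) : HasFDerivAt (fun q => Real.exp (β * ⟪x t, q⟫))
      (innerSL ℝ ((β * Real.exp (β * ⟪x t, q⟫)) • x t)) q := by
    refine (((innerSL ℝ (x t)).hasFDerivAt).const_mul β).exp.congr_fderiv ?_
    ext v
    simp only [coe_innerSL_apply, smul_apply, smul_eq_mul, map_smul]
    ring
  refine hasFDerivAt_integral_of_dominated_of_fderiv_le
    (bound := fun _ => |β| * Real.exp (|β| * (M * (‖q₀‖ + 1))) * M)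
    (Metric.ball_mem_nhds q₀ one_pos) (.of_forall fun q => by fun_prop)
    (integrable_exp_mul_inner hx hM q₀) (by fun_prop) ?_ (integrable_const _)
    (.of_forall fun t q _ => hderiv t q)
  filter_upwards [hM] with t ht q hq
  have hq' : ‖q‖ ≤ ‖q₀‖ + 1 :=
    (norm_le_insert' q q₀).trans (by rw [← dist_eq_norm]; linarith [Metric.mem_ball.1 hq])
  rw [innerSL_apply_norm, norm_smul, norm_mul, Real.norm_eq_abs,
    Real.norm_of_nonneg (Real.exp_pos _).le]
  exact mul_le_mul (mul_le_mul_of_nonneg_left (exp_mul_inner_le ht hq') (abs_nonneg β)) ht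
    (norm_nonneg _) (by positivity)

theorem hasGradientAt_partitionFunction [CompleteSpace E] (hx : AEStronglyMeasurable x μ)
    (hM : ∀ᵐ t ∂μ, ‖x t‖ ≤ M) (q : E) :
    HasGradientAt (partitionFunction μ β x) (β • ∫ t, Real.exp (β * ⟪x t, q⟫) • x t ∂μ) q := by
  have hint : Integrable (fun t => (β * Real.exp (β * ⟪x t, q⟫)) • x t) μ :=
    ((integrable_exp_mul_inner hx hM q).const_mul β).smul_bdd M hx hM
  have h := hasFDerivAt_partitionFunction (β := β) hx hM q
  simp_rw [(innerSL ℝ).integral_comp_comm hint, mul_smul, integral_smul] at h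
  exact hasGradientAt_iff_hasFDerivAt.2 h

theorem hasGradientAt_log_partitionFunction [CompleteSpace E] [NeZero μ]
    (hx : AEStronglyMeasurable x μ) (hM : ∀ᵐ t ∂μ, ‖x t‖ ≤ M) (q : E) :
    HasGradientAt (Real.log ∘ partitionFunction μ β x)
      (β • ∫ t, gibbsDensity μ β x q t • x t ∂μ) q := by
  convert (Real.hasDerivAt_log (partitionFunction_pos hx hM q).ne').comp_hasGradientAt
    (hasGradientAt_partitionFunction (β := β) hx hM q) using 1
  simp only [gibbsDensity, div_eq_inv_mul, mul_smul, integral_smul]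
  exact smul_comm _ _ _

end GibbsMeasure

theorem gradient_Econcave_eq_neg_gibbs_expectation_general
    (D : ℕ)
    (x : ℝ → EuclideanSpace ℝ (Fin D)) (hx : ContinuousOn x (Set.Icc 0 1))
    (β : ℝ) (hβ : 0 < β)
    (Econcave : EuclideanSpace ℝ (Fin D) → ℝ)
    (hEconcave : Econcave = fun q =>
      -(1 / β) * Real.log (∫ t in Set.Icc (0 : ℝ) 1, Real.exp (β * ⟪x t, q⟫)))
    (p : EuclideanSpace ℝ (Fin D) → ℝ → ℝ)
    (hp : p = fun q t =>
      Real.exp (β * ⟪x t, q⟫) / ∫ s in Set.Icc (0 : ℝ) 1, Real.exp (β * ⟪x s, q⟫)) :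
    Differentiable ℝ Econcave ∧
    ∀ q, gradient Econcave q = -∫ t in Set.Icc (0 : ℝ) 1, p q t • x t := by
  obtain ⟨M, hM⟩ := isCompact_Icc.exists_bound_of_continuousOn hx
  have : NeZero ((volume : Measure ℝ).restrict (Set.Icc (0 : ℝ) 1)) := ⟨by simp⟩
  have hE (q) : HasGradientAt Econcave (-∫ t in Set.Icc (0 : ℝ) 1, p q t • x t) q := by
    have hlog := hasGradientAt_log_partitionFunction (μ := volume.restrict (Set.Icc 0 1)) (β := β)
      (hx.aestronglyMeasurable measurableSet_Icc) (ae_restrict_of_forall_mem measurableSet_Icc hM) q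
    have h := ((hasDerivAt_id' _).const_mul (-(1 / β))).comp_hasGradientAt hlog
    rw [smul_smul, mul_one, neg_mul, one_div_mul_cancel hβ.ne', neg_one_smul] at h
    subst hEconcave hp
    exact h
  exact ⟨fun q => (hE q).differentiableAt, fun q => (hE q).gradient⟩

/-- The concave part of the continuous Hopfield energy is differentiable, with gradient
equal to the negative Gibbs expectation: `∇E_concave(q) = -∫₀¹ p_q(t) • x̄(t) dt`. -/
theorem gradient_Econcave_eq_neg_gibbs_expectation
    (D : ℕ) (hD : 0 < D)
    (x : ℝ → EuclideanSpace ℝ (Fin D)) (hx : ContinuousOn x (Set.Icc 0 1))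
    (β : ℝ) (hβ : 0 < β)
    (Econcave : EuclideanSpace ℝ (Fin D) → ℝ)
    (hEconcave : Econcave = fun q =>
      -(1 / β) * Real.log (∫ t in Set.Icc (0 : ℝ) 1, Real.exp (β * ⟪x t, q⟫)))
    (p : EuclideanSpace ℝ (Fin D) → ℝ → ℝ)
    (hp : p = fun q t =>
      Real.exp (β * ⟪x t, q⟫) / ∫ s in Set.Icc (0 : ℝ) 1, Real.exp (β * ⟪x s, q⟫)) :
    Differentiable ℝ Econcave ∧
    ∀ q, gradient Econcave q = -∫ t in Set.Icc (0 : ℝ) 1, p q t • x t :=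
  gradient_Econcave_eq_neg_gibbs_expectation_general D x hx β hβ Econcave hEconcave p hp
end

section
/- Let D be a positive natural number, let x̄ : [0,1] → ℝ^D be a continuous function, and let β > 0. Define the continuous Hopfield energy E(q) = -(1/β) · log(∫₀¹ exp(β · ⟪x̄(t), q⟫) dt) + (1/2)·‖q‖², and the Gibbs density p_q(t) = exp(β · ⟪x̄(t), q⟫) / ∫₀¹ exp(β · ⟪x̄(s), q⟫) ds. Then E is differentiable on ℝ^D, and for every q ∈ ℝ^D one has ∇E(q) = 0 if and only if q = ∫₀¹ p_q(t) · x̄(t) dt; that is, the stationary points of the energy are exactly the fixed points of the Gibbs expectation update rule. -/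
/-!
Differentiating under the integral sign (for bounded `x` and a finite measure the derivative
of the integrand is dominated by a constant near every point) gives
`∇Z(q) = β • ∫ exp (β ⟪x t, q⟫) • x t` for the partition function `Z`, hence
`∇E(q) = q - Z(q)⁻¹ • ∫ exp (β ⟪x t, q⟫) • x t = q - 𝔼_{p_q}[x]`. So `∇E(q) = 0` says exactly
that `q` is a fixed point of the Gibbs expectation update.
-/

open MeasureTheory RealInnerProductSpace

namespace GibbsEnergy

variable {α E : Type*} [MeasurableSpace α] {μ : Measure α}
  [NormedAddCommGroup E] [InnerProductSpace ℝ E]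

noncomputable def partitionFunction (μ : Measure α) (β : ℝ) (x : α → E) (q : E) : ℝ :=
  ∫ t, Real.exp (β * ⟪x t, q⟫) ∂μ

noncomputable def gibbsMean (μ : Measure α) (β : ℝ) (x : α → E) (q : E) : E :=
  ∫ t, (Real.exp (β * ⟪x t, q⟫) / partitionFunction μ β x q) • x t ∂μ

noncomputable def hopfieldEnergy (μ : Measure α) (β : ℝ) (x : α → E) (q : E) : ℝ :=
  -(1 / β) * Real.log (partitionFunction μ β x q) + 1 / 2 * ‖q‖ ^ 2

lemma gibbsMean_eq_inv_smul (β : ℝ) (x : α → E) (q : E) : gibbsMean μ β x q =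
    (partitionFunction μ β x q)⁻¹ • ∫ t, Real.exp (β * ⟪x t, q⟫) • x t ∂μ := by
  simp only [gibbsMean, ← integral_smul, smul_smul, div_eq_inv_mul]

lemma exp_mul_inner_le {β M R : ℝ} {v y : E} (hv : ‖v‖ ≤ M) (hy : ‖y‖ ≤ R) :
    Real.exp (β * ⟪v, y⟫) ≤ Real.exp (|β| * (M * R)) := by
  have hM : 0 ≤ M := (norm_nonneg v).trans hv
  refine Real.exp_le_exp.2 ?_
  calc β * ⟪v, y⟫ ≤ |β| * |⟪v, y⟫| := by
        rw [← abs_mul]; exact le_abs_self _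
    _ ≤ |β| * (M * R) := by
        gcongr
        exact (abs_real_inner_le_norm v y).trans (mul_le_mul hv hy (norm_nonneg y) hM)

lemma hasFDerivAt_exp_mul_inner (β : ℝ) (v y : E) :
    HasFDerivAt (fun q => Real.exp (β * ⟪v, q⟫))
      (innerSL ℝ ((β * Real.exp (β * ⟪v, y⟫)) • v)) y := by
  have h := (((innerSL ℝ v).hasFDerivAt (x := y)).const_mul β).exp
  simp only [innerSL_apply_apply] at h
  convert h using 1
  ext z
  simp
  ring

variable {x : α → E} {M : ℝ}

lemma aestronglyMeasurable_exp_mul_inner (hxm : AEStronglyMeasurable x μ) (β : ℝ) (q : E) :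
    AEStronglyMeasurable (fun t => Real.exp (β * ⟪x t, q⟫)) μ :=
  (by fun_prop : Continuous fun v : E => Real.exp (β * ⟪v, q⟫)).comp_aestronglyMeasurable hxm

variable [IsFiniteMeasure μ]

lemma integrable_exp_mul_inner (hxm : AEStronglyMeasurable x μ) (hM : ∀ᵐ t ∂μ, ‖x t‖ ≤ M)
    (β : ℝ) (q : E) : Integrable (fun t => Real.exp (β * ⟪x t, q⟫)) μ := by
  refine .of_bound (aestronglyMeasurable_exp_mul_inner hxm β q) (Real.exp (|β| * (M * ‖q‖))) ?_
  filter_upwards [hM] with t ht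
  rw [Real.norm_of_nonneg (Real.exp_pos _).le]
  exact exp_mul_inner_le ht le_rfl

lemma partitionFunction_pos [NeZero μ] (hxm : AEStronglyMeasurable x μ)
    (hM : ∀ᵐ t ∂μ, ‖x t‖ ≤ M) (β : ℝ) (q : E) : 0 < partitionFunction μ β x q :=
  integral_exp_pos (integrable_exp_mul_inner hxm hM β q)

variable [CompleteSpace E]

theorem hasGradientAt_partitionFunction (hxm : AEStronglyMeasurable x μ)
    (hM : ∀ᵐ t ∂μ, ‖x t‖ ≤ M) (β : ℝ) (q : E) :
    HasGradientAt (partitionFunction μ β x) (β • ∫ t, Real.exp (β * ⟪x t, q⟫) • x t ∂μ) q := by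
  have hF' : ∀ y, Integrable (fun t => (β * Real.exp (β * ⟪x t, y⟫)) • x t) μ := fun y =>
    ((integrable_exp_mul_inner hxm hM β y).const_mul β).smul_bdd M hxm hM
  rw [hasGradientAt_iff_hasFDerivAt, ← integral_smul]
  have hdual : InnerProductSpace.toDual ℝ E (∫ t, β • Real.exp (β * ⟪x t, q⟫) • x t ∂μ) =
      ∫ t, innerSL ℝ ((β * Real.exp (β * ⟪x t, q⟫)) • x t) ∂μ := by
    simp only [← mul_smul]
    exact ((innerSL ℝ).integral_comp_comm (hF' q)).symm
  rw [hdual]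
  refine hasFDerivAt_integral_of_dominated_of_fderiv_le (Metric.ball_mem_nhds q one_pos)
    (bound := fun _ => |β| * Real.exp (|β| * (M * (‖q‖ + 1))) * M)
    (.of_forall fun y => aestronglyMeasurable_exp_mul_inner hxm β y)
    (integrable_exp_mul_inner hxm hM β q)
    ((innerSL ℝ).continuous.comp_aestronglyMeasurable (hF' q).aestronglyMeasurable)
    ?_ (integrable_const _) (.of_forall fun t y _ => hasFDerivAt_exp_mul_inner β (x t) y)
  filter_upwards [hM] with t ht y hy
  have hy' : ‖y‖ ≤ ‖q‖ + 1 := by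
    linarith [norm_le_norm_add_norm_sub' y q, mem_ball_iff_norm.mp hy]
  rw [innerSL_apply_norm, norm_smul, Real.norm_eq_abs, abs_mul,
    abs_of_pos (Real.exp_pos _)]
  exact mul_le_mul (mul_le_mul_of_nonneg_left (exp_mul_inner_le ht hy') (abs_nonneg β)) ht
    (norm_nonneg _) (by positivity)

theorem hasGradientAt_hopfieldEnergy [NeZero μ] (hxm : AEStronglyMeasurable x μ)
    (hM : ∀ᵐ t ∂μ, ‖x t‖ ≤ M) {β : ℝ} (hβ : β ≠ 0) (q : E) :
    HasGradientAt (hopfieldEnergy μ β x) (q - gibbsMean μ β x q) q := by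
  have hZ := partitionFunction_pos hxm hM β q
  have hlogZ := ((hasGradientAt_partitionFunction hxm hM β q).hasFDerivAt.log hZ.ne').const_mul
    (-(1 / β))
  have hnorm := (hasStrictFDerivAt_norm_sq q).hasFDerivAt.const_mul (1 / 2 : ℝ)
  refine (hlogZ.add hnorm).congr_fderiv ?_
  ext y
  simp [gibbsMean_eq_inv_smul]
  field_simp
  ring

end GibbsEnergy

open GibbsEnergy in
theorem energy_stationary_iff_gibbs_fixed_point_general
    (D : ℕ)
    (x : ℝ → EuclideanSpace ℝ (Fin D)) (hx : ContinuousOn x (Set.Icc 0 1))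
    (β : ℝ) (hβ : 0 < β)
    (E : EuclideanSpace ℝ (Fin D) → ℝ)
    (hE : E = fun q =>
      -(1 / β) * Real.log (∫ t in Set.Icc (0 : ℝ) 1, Real.exp (β * ⟪x t, q⟫)) +
        (1 / 2) * ‖q‖ ^ 2)
    (p : EuclideanSpace ℝ (Fin D) → ℝ → ℝ)
    (hp : p = fun q t =>
      Real.exp (β * ⟪x t, q⟫) / ∫ s in Set.Icc (0 : ℝ) 1, Real.exp (β * ⟪x s, q⟫)) :
    Differentiable ℝ E ∧
    ∀ q, gradient E q = 0 ↔ q = ∫ t in Set.Icc (0 : ℝ) 1, p q t • x t := by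
  have : NeZero (volume.restrict (Set.Icc (0 : ℝ) 1)) := ⟨by simp⟩
  obtain ⟨M, hM⟩ := isCompact_Icc.exists_bound_of_continuousOn hx
  have hgrad : ∀ q, HasGradientAt E (q - gibbsMean (volume.restrict (Set.Icc 0 1)) β x q) q :=
    hE ▸ hasGradientAt_hopfieldEnergy (hx.aestronglyMeasurable measurableSet_Icc)
      (ae_restrict_of_forall_mem measurableSet_Icc hM) hβ.ne'
  refine ⟨fun q => (hgrad q).differentiableAt, fun q => ?_⟩
  rw [(hgrad q).gradient, sub_eq_zero, hp]
  rfl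

/-- The continuous Hopfield energy `E` is differentiable, and its stationary points are
exactly the fixed points of the Gibbs expectation update rule
`q ↦ ∫₀¹ p_q(t) • x̄(t) dt`. -/
theorem energy_stationary_iff_gibbs_fixed_point
    (D : ℕ) (hD : 0 < D)
    (x : ℝ → EuclideanSpace ℝ (Fin D)) (hx : ContinuousOn x (Set.Icc 0 1))
    (β : ℝ) (hβ : 0 < β)
    (E : EuclideanSpace ℝ (Fin D) → ℝ)
    (hE : E = fun q =>
      -(1 / β) * Real.log (∫ t in Set.Icc (0 : ℝ) 1, Real.exp (β * ⟪x t, q⟫)) +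
        (1 / 2) * ‖q‖ ^ 2)
    (p : EuclideanSpace ℝ (Fin D) → ℝ → ℝ)
    (hp : p = fun q t =>
      Real.exp (β * ⟪x t, q⟫) / ∫ s in Set.Icc (0 : ℝ) 1, Real.exp (β * ⟪x s, q⟫)) :
    Differentiable ℝ E ∧
    ∀ q, gradient E q = 0 ↔ q = ∫ t in Set.Icc (0 : ℝ) 1, p q t • x t :=
  energy_stationary_iff_gibbs_fixed_point_general D x hx β hβ E hE p hp
end
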